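/- arXiv:0909.4669 — 6 statements merged into one kernel-verified Lean document; each statement's English description precedes it below -/
import Mathlib

section
/- Let r ∈ (0,1), λ > 0, x > 0, y > 0, and set R = (r/(1-r))·e^λ. Define f(t) = (λ^y (1-r)^x / Γ(y)) · Σ_{k≥0} [x(x-1)⋯(x-k+1)/k!] · R^k · e^{-λt} · max(t-k,0)^{y-1} for t > 0. If R ≤ 1 and y ≥ 1, then f(t) ≥ 0 for all t > 0. -/
open Real Finset

noncomputable def binomTerm (x R : ℝ) (n : ℕ) : ℝ :=
  (∏ i ∈ Finset.range n, (x - i)) / (Nat.factorial n) * R ^ n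

lemma binomTerm_succ (x R : ℝ) (n : ℕ) :
    binomTerm x R (n + 1) = binomTerm x R n * ((x - n) / (n + 1) * R) := by
  have hfac : ((Nat.factorial n : ℝ)) ≠ 0 := by positivity
  have hn1 : ((n : ℝ) + 1) ≠ 0 := by positivity
  simp only [binomTerm, Finset.prod_range_succ, Nat.factorial_succ]
  push_cast
  field_simp
  ring

lemma binom_partial (x R : ℝ) (hx : 0 < x) (hR0 : 0 ≤ R) (hR1 : R ≤ 1) :
    ∀ n : ℕ, 0 ≤ (∑ k ∈ Finset.range n, binomTerm x R k)
      ∧ 0 ≤ (∑ k ∈ Finset.range n, binomTerm x R k) + binomTerm x R n := by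
  intro n
  induction n with
  | zero => simp [binomTerm]
  | succ n ih =>
    obtain ⟨h1, h2⟩ := ih
    rw [Finset.sum_range_succ]
    refine ⟨h2, ?_⟩
    rw [binomTerm_succ]
    by_cases hxn : x ≤ n
    · -- factor := (x - n)/(n+1) * R ∈ [-1, 0]
      have hfac_le : (x - n) / (n + 1) * R ≤ 0 := by
        apply mul_nonpos_of_nonpos_of_nonneg _ hR0
        apply div_nonpos_of_nonpos_of_nonneg (by linarith) (by positivity)
      have hfac_ge : -1 ≤ (x - n) / (n + 1) * R := by
        have h1' : (n : ℝ) - x ≤ (n : ℝ) + 1 := by linarith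
        have h2' : ((n : ℝ) - x) / ((n : ℝ) + 1) ≤ 1 :=
          (div_le_one (by positivity)).mpr h1'
        have h3' : ((n : ℝ) - x) / ((n : ℝ) + 1) * R ≤ 1 * 1 := by
          apply mul_le_mul h2' hR1 hR0
          have : (0:ℝ) ≤ (n : ℝ) - x ∨ True := Or.inr trivial
          positivity
        have : (x - (n:ℝ)) / ((n:ℝ) + 1) * R = -(((n:ℝ) - x) / ((n:ℝ) + 1) * R) := by
          ring
        rw [this]
        linarith
      by_cases han : 0 ≤ binomTerm x R n
      · nlinarith [h1]
      · push_neg at han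
        have : 0 ≤ binomTerm x R n * ((x - n) / (n + 1) * R) := by nlinarith
        linarith
    · push_neg at hxn
      have hterm : 0 ≤ binomTerm x R (n + 1) := by
        apply mul_nonneg _ (pow_nonneg hR0 _)
        apply div_nonneg _ (by positivity)
        apply Finset.prod_nonneg
        intro i hi
        have : (i : ℝ) < x := by
          have : (i : ℝ) ≤ n := by
            exact_mod_cast Nat.lt_succ_iff.mp (Finset.mem_range.mp hi)
          linarith
        linarith
      rw [binomTerm_succ] at hterm
      linarith

lemma abel_nonneg (a b : ℕ → ℝ) (ha : ∀ n, 0 ≤ ∑ k ∈ Finset.range n, a k)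
    (hb0 : ∀ n, 0 ≤ b n) (hbmono : ∀ n, b (n + 1) ≤ b n) :
    ∀ n, b n * (∑ k ∈ Finset.range n, a k) ≤ ∑ k ∈ Finset.range n, a k * b k := by
  intro n
  induction n with
  | zero => simp
  | succ n ih =>
    rw [Finset.sum_range_succ, Finset.sum_range_succ]
    have h1 : b (n + 1) * (∑ k ∈ Finset.range n, a k + a n)
        ≤ b n * (∑ k ∈ Finset.range n, a k + a n) := by
      apply mul_le_mul_of_nonneg_right (hbmono n)
      have := ha (n + 1)
      rwa [Finset.sum_range_succ] at this
    nlinarith [ih]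

lemma tsum_nonneg_of_partial (g : ℕ → ℝ) (h : ∀ n, 0 ≤ ∑ k ∈ Finset.range n, g k) :
    0 ≤ ∑' k, g k := by
  by_cases hs : Summable g
  · exact ge_of_tendsto' hs.hasSum.tendsto_sum_nat h
  · simp [tsum_eq_zero_of_not_summable hs]

theorem gamma_bernoulli_density_nonneg
    (r l x y : ℝ) (hr : r ∈ Set.Ioo (0:ℝ) 1) (hl : 0 < l) (hx : 0 < x) (hy : 0 < y)
    (R : ℝ) (hR : R = r / (1 - r) * Real.exp l)
    (f : ℝ → ℝ)
    (hf : ∀ t, f t = l ^ y * (1 - r) ^ x / Real.Gamma y *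
      ∑' k : ℕ, (∏ i ∈ Finset.range k, (x - i)) / (Nat.factorial k) * R ^ k *
        Real.exp (-l * t) * (max (t - k) 0) ^ (y - 1))
    (hR1 : R ≤ 1) (hy1 : 1 ≤ y) :
    ∀ t > (0:ℝ), 0 ≤ f t := by
  intro t ht
  rw [hf t]
  have hr0 := hr.1
  have hr1 := hr.2
  have hR0 : 0 ≤ R := by
    rw [hR]
    have : 0 < r / (1 - r) := div_pos hr0 (by linarith)
    positivity
  set b : ℕ → ℝ := fun k => Real.exp (-l * t) * (max (t - k) 0) ^ (y - 1) with hb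
  have hb0 : ∀ n, 0 ≤ b n := by
    intro n
    apply mul_nonneg (Real.exp_nonneg _)
    exact Real.rpow_nonneg (le_max_right _ _) _
  have hbmono : ∀ n, b (n + 1) ≤ b n := by
    intro n
    apply mul_le_mul_of_nonneg_left _ (Real.exp_nonneg _)
    apply Real.rpow_le_rpow (le_max_right _ _) _ (by linarith)
    apply max_le_max _ le_rfl
    push_cast
    linarith
  have hkey : 0 ≤ ∑' k : ℕ, (∏ i ∈ Finset.range k, (x - i)) / (Nat.factorial k) * R ^ k *
      Real.exp (-l * t) * (max (t - k) 0) ^ (y - 1) := by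
    have heq : ∀ k : ℕ, (∏ i ∈ Finset.range k, (x - i)) / (Nat.factorial k) * R ^ k *
        Real.exp (-l * t) * (max (t - k) 0) ^ (y - 1) = binomTerm x R k * b k := by
      intro k
      simp only [binomTerm, hb]
      ring
    simp only [heq]
    apply tsum_nonneg_of_partial
    intro n
    calc (0:ℝ) ≤ b n * (∑ k ∈ Finset.range n, binomTerm x R k) :=
          mul_nonneg (hb0 n) (binom_partial x R hx hR0 hR1 n).1
      _ ≤ ∑ k ∈ Finset.range n, binomTerm x R k * b k :=
          abel_nonneg _ b (fun m => (binom_partial x R hx hR0 hR1 m).1) hb0 hbmono n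
  have hc : 0 < l ^ y * (1 - r) ^ x / Real.Gamma y := by
    apply div_pos _ (Real.Gamma_pos_of_pos hy)
    exact mul_pos (Real.rpow_pos_of_pos hl y) (Real.rpow_pos_of_pos (by linarith) x)
  exact mul_nonneg hc.le hkey
end

section
/- Let r ∈ (0,1), λ > 0, x > 0, 0 < y < 1, and set R = (r/(1-r))·e^λ with R ≤ 1. Suppose x is not an integer, and let k₀ be the positive integer with k₀ - 1 ≤ x < k₀. Define f(t) = (λ^y (1-r)^x / Γ(y)) · Σ_{k≥0} [x(x-1)⋯(x-k+1)/k!] · R^k · e^{-λt} · max(t-k,0)^{y-1}. Then f(t) → -∞ as t → (k₀+1)⁺, i.e., f takes negative values on (k₀+1, k₀+2). -/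
/-!
For `t < k₀ + 2` the series is the finite sum over `k ≤ k₀ + 1`, because Mathlib's `0 ^ s` is `0`
for `s ≠ 0`. The terms with `k ≤ k₀` are continuous at `k₀ + 1`. In the last term the coefficient
`x (x - 1) ⋯ (x - k₀) / (k₀ + 1)! · R ^ (k₀ + 1)` is negative, since `x - k₀` is its only negative
factor, and `(t - k₀ - 1) ^ (y - 1) → ∞` as `t → (k₀ + 1)⁺` because `y < 1`.
-/

open Real Finset Filter Topology

theorem prod_range_sub_pos {x : ℝ} {n : ℕ} (hx : ∀ i < n, (i : ℝ) < x) :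
    0 < ∏ i ∈ range n, (x - i) :=
  prod_pos fun i hi => sub_pos.2 (hx i (mem_range.1 hi))

theorem prod_range_succ_sub_neg {x : ℝ} {n : ℕ} (h₁ : (n : ℝ) - 1 < x) (h₂ : x < n) :
    ∏ i ∈ range (n + 1), (x - i) < 0 := by
  rw [prod_range_succ]
  refine mul_neg_of_pos_of_neg (prod_range_sub_pos fun i hi => ?_) (sub_neg.2 h₂)
  have : (i : ℝ) + 1 ≤ n := by exact_mod_cast hi
  linarith

theorem tendsto_sub_nhdsGT_zero (a : ℝ) :
    Tendsto (fun t : ℝ => t - a) (𝓝[>] a) (𝓝[>] 0) := by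
  refine tendsto_nhdsWithin_of_tendsto_nhds_of_eventually_within _ ?_ ?_
  · simpa using (tendsto_id.sub_const a).mono_left (nhdsWithin_le_nhds (a := a) (s := Set.Ioi a))
  · filter_upwards [self_mem_nhdsWithin] with t ht using sub_pos.2 (Set.mem_Ioi.1 ht)

theorem tendsto_max_sub_rpow_nhdsGT_atTop {s : ℝ} (hs : s < 0) (a : ℝ) :
    Tendsto (fun t => max (t - a) 0 ^ s) (𝓝[>] a) atTop := by
  refine ((tendsto_rpow_neg_nhdsGT_zero hs).comp (tendsto_sub_nhdsGT_zero a)).congr' ?_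
  filter_upwards [self_mem_nhdsWithin] with t ht
  simp [max_eq_left (sub_pos.2 (Set.mem_Ioi.1 ht)).le]

theorem continuousAt_max_sub_rpow {a b : ℝ} (h : a < b) (s : ℝ) :
    ContinuousAt (fun t => max (t - a) 0 ^ s) b :=
  (continuousAt_id.sub continuousAt_const).max continuousAt_const |>.rpow_const
    (Or.inl (by simp [h]))

theorem tsum_mul_max_sub_rpow_eq_sum {s t : ℝ} (hs : s ≠ 0) {n : ℕ} (ht : t ≤ n) (a : ℕ → ℝ) :
    ∑' k : ℕ, a k * max (t - k) 0 ^ s = ∑ k ∈ range n, a k * max (t - k) 0 ^ s := by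
  refine tsum_eq_sum fun k hk => ?_
  have : t - k ≤ 0 := by
    have : (n : ℝ) ≤ k := by exact_mod_cast not_lt.1 (mt mem_range.2 hk)
    linarith
  rw [max_eq_right this, zero_rpow hs, mul_zero]

theorem tendsto_sum_mul_max_sub_rpow_atBot {s : ℝ} (hs : s < 0) {n : ℕ} {a : ℕ → ℝ}
    (ha : a n < 0) {e : ℝ → ℝ} (he : ContinuousAt e n) (he₀ : 0 < e n) :
    Tendsto (fun t => ∑ k ∈ range (n + 1), a k * e t * max (t - k) 0 ^ s) (𝓝[>] n) atBot := by
  simp only [sum_range_succ]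
  refine Tendsto.add_atBot (C := ∑ k ∈ range n, a k * e n * max ((n : ℝ) - k) 0 ^ s) ?_ ?_
  · refine (tendsto_finsetSum _ fun k hk => ?_).mono_left nhdsWithin_le_nhds
    have hk : (k : ℝ) < n := by exact_mod_cast mem_range.1 hk
    exact (continuousAt_const.mul he).mul (continuousAt_max_sub_rpow hk s) |>.tendsto
  · simp_rw [mul_assoc]
    refine tendsto_const_nhds.neg_mul_atTop ha ?_
    exact .pos_mul_atTop he₀ (he.tendsto.mono_left nhdsWithin_le_nhds)
      (tendsto_max_sub_rpow_nhdsGT_atTop hs _)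

theorem gamma_bernoulli_density_negative_general
    (r l x y : ℝ) (hr : r ∈ Set.Ioo (0:ℝ) 1) (hl : 0 < l)
    (hy : 0 < y) (hy1 : y < 1)
    (R : ℝ) (hR : R = r / (1 - r) * Real.exp l)
    (hxnotint : ∀ n : ℤ, x ≠ n)
    (k₀ : ℕ) (hk₀ : (k₀ : ℝ) - 1 ≤ x ∧ x < k₀)
    (f : ℝ → ℝ)
    (hf : ∀ t, f t = l ^ y * (1 - r) ^ x / Real.Gamma y *
      ∑' k : ℕ, (∏ i ∈ Finset.range k, (x - i)) / (Nat.factorial k) * R ^ k *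
        Real.exp (-l * t) * (max (t - k) 0) ^ (y - 1)) :
    Tendsto f (nhdsWithin ((k₀ : ℝ) + 1) (Set.Ioi ((k₀ : ℝ) + 1))) atBot ∧
      ∃ t ∈ Set.Ioo ((k₀ : ℝ) + 1) ((k₀ : ℝ) + 2), f t < 0 := by
  have h1r : 0 < 1 - r := sub_pos.2 hr.2
  have hR₀ : 0 < R := hR ▸ mul_pos (div_pos hr.1 h1r) (exp_pos l)
  have hC : 0 < l ^ y * (1 - r) ^ x / Gamma y := by
    have := Gamma_pos_of_pos hy
    positivity
  have hx : (k₀ : ℝ) - 1 < x := hk₀.1.lt_of_ne (by exact_mod_cast (hxnotint (k₀ - 1)).symm)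
  have ha : (∏ i ∈ range (k₀ + 1), (x - i)) / ((k₀ + 1).factorial : ℝ) * R ^ (k₀ + 1) < 0 :=
    mul_neg_of_neg_of_pos (div_neg_of_neg_of_pos (prod_range_succ_sub_neg hx hk₀.2)
      (by positivity)) (pow_pos hR₀ _)
  have hsum := tendsto_sum_mul_max_sub_rpow_atBot (sub_neg.2 hy1)
    (a := fun k => (∏ i ∈ range k, (x - i)) / (k.factorial : ℝ) * R ^ k) ha
    (e := fun t => exp (-l * t)) (by fun_prop) (exp_pos _)
  push_cast at hsum
  have hnear : Set.Ioo ((k₀ : ℝ) + 1) (k₀ + 2) ∈ 𝓝[>] ((k₀ : ℝ) + 1) :=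
    Ioo_mem_nhdsGT (by linarith)
  have hlim : Tendsto f (𝓝[>] ((k₀ : ℝ) + 1)) atBot := by
    refine ((tendsto_const_mul_atBot_of_pos hC).2 hsum).congr' ?_
    filter_upwards [hnear] with t ht
    have ht₂ : t ≤ ((k₀ + 2 : ℕ) : ℝ) := by push_cast; linarith [ht.2]
    rw [hf, tsum_mul_max_sub_rpow_eq_sum (sub_ne_zero.2 hy1.ne) ht₂]
  obtain ⟨t, hft, ht⟩ := ((hlim.eventually_lt_atBot 0).and hnear).exists
  exact ⟨hlim, t, ht, hft⟩

theorem gamma_bernoulli_density_negative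
    (r l x y : ℝ) (hr : r ∈ Set.Ioo (0:ℝ) 1) (hl : 0 < l) (hx : 0 < x)
    (hy : 0 < y) (hy1 : y < 1)
    (R : ℝ) (hR : R = r / (1 - r) * Real.exp l) (hR1 : R ≤ 1)
    (hxnotint : ∀ n : ℤ, x ≠ n)
    (k₀ : ℕ) (hk₀pos : 0 < k₀) (hk₀ : (k₀ : ℝ) - 1 ≤ x ∧ x < k₀)
    (f : ℝ → ℝ)
    (hf : ∀ t, f t = l ^ y * (1 - r) ^ x / Real.Gamma y *
      ∑' k : ℕ, (∏ i ∈ Finset.range k, (x - i)) / (Nat.factorial k) * R ^ k *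
        Real.exp (-l * t) * (max (t - k) 0) ^ (y - 1)) :
    Tendsto f (nhdsWithin ((k₀ : ℝ) + 1) (Set.Ioi ((k₀ : ℝ) + 1))) atBot ∧
      ∃ t ∈ Set.Ioo ((k₀ : ℝ) + 1) ((k₀ : ℝ) + 2), f t < 0 :=
  gamma_bernoulli_density_negative_general r l x y hr hl hy hy1 R hR hxnotint k₀ hk₀ f hf
end

section
/- Let r ∈ (0,1), λ > 0 with R = (r/(1-r))·e^λ > 1, and let x > 0 be a non-integer real and y > 0. Then there is no probability measure μ on ℝ whose Laplace transform satisfies ∫ e^{θt} dμ(t) = (1-r+r·e^θ)^x · (λ/(λ-θ))^y for all θ < λ. -/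
/-!
If such a `μ` existed, its Laplace transform would extend holomorphically to the half-plane
`Re z < l`, so `G z = (∫ e^{zt} dμ) * (1 - z / l) ^ y` would be holomorphic there and equal to
`g θ ^ x` on the real axis, where `g z = 1 - r + r e^z`. Differentiating, `G' g = x g' G` near the
real axis, hence on the whole half-plane. Since `R > 1`, the half-plane contains the simple zero
`z₀ = log ((1 - r) / r) + iπ` of `g`. Writing `G = (z - z₀) ^ n u` with `u z₀ ≠ 0` (possible as
`G 0 = 1`) and comparing leading terms of `G' g = x g' G` at `z₀` gives `x = n`.
-/

open MeasureTheory Real Filter Topology ProbabilityTheory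

theorem AnalyticAt.eq_analyticOrderAt_of_deriv_mul_eq_mul_deriv_mul {𝕜 : Type*}
    [NontriviallyNormedField 𝕜] [CompleteSpace 𝕜] {f g : 𝕜 → 𝕜} {z₀ c : 𝕜} {n : ℕ}
    (hf : AnalyticAt 𝕜 f z₀) (hg : AnalyticAt 𝕜 g z₀) (hgz₀ : g z₀ = 0)
    (hg' : deriv g z₀ ≠ 0) (hode : ∀ᶠ z in 𝓝 z₀, deriv f z * g z = c * deriv g z * f z)
    (hn : analyticOrderAt f z₀ = n) : c = n := by
  obtain ⟨u, hu, hu0, hfu⟩ := hf.analyticOrderAt_eq_natCast.1 hn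
  replace hfu : f =ᶠ[𝓝 z₀] fun z => (z - z₀) ^ n * u z :=
    hfu.mono fun _ hz => by rwa [smul_eq_mul] at hz
  have hderiv : ∀ᶠ z in 𝓝 z₀,
      deriv f z = n * (z - z₀) ^ (n - 1) * u z + (z - z₀) ^ n * deriv u z := by
    filter_upwards [hfu.eventuallyEq_nhds, hu.eventually_analyticAt] with z hfz huz
    rw [hfz.deriv_eq]
    have := (((hasDerivAt_id z).sub_const z₀).fun_pow n).fun_mul huz.differentiableAt.hasDerivAt
    simpa only [id, sub_zero, mul_one] using this.deriv
  -- the ODE divided by `(z - z₀) ^ n`, after factoring `g = (z - z₀) * dslope g z₀`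
  let h : 𝕜 → 𝕜 := fun z =>
    (n * u z + (z - z₀) * deriv u z) * dslope g z₀ z - c * deriv g z * u z
  have hh : ∀ᶠ z in 𝓝[≠] z₀, h z = 0 := by
    filter_upwards [eventually_nhdsWithin_of_eventually_nhds (hode.and (hfu.and hderiv)),
      self_mem_nhdsWithin] with z ⟨hodez, hfz, hdz⟩ hz
    have hgz : g z = (z - z₀) * dslope g z₀ z := by
      rw [← smul_eq_mul, sub_smul_dslope, hgz₀, sub_zero]
    have hpow : (n : 𝕜) * (z - z₀) ^ (n - 1) * (z - z₀) = n * (z - z₀) ^ n := by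
      rcases n with _ | n <;> simp [pow_succ, mul_assoc]
    rw [hdz, hgz, hfz] at hodez
    refine (mul_eq_zero.1 ?_).resolve_left (pow_ne_zero n (sub_ne_zero.2 hz))
    linear_combination hodez - u z * dslope g z₀ z * hpow
  have hcont : ContinuousAt h z₀ := by
    have hdslope : ContinuousAt (dslope g z₀) z₀ :=
      continuousAt_dslope_same.2 hg.differentiableAt
    exact ((continuousAt_const.mul hu.continuousAt).add
      ((continuousAt_id.sub continuousAt_const).mul hu.deriv.continuousAt)).mul hdslope |>.sub
      ((continuousAt_const.mul hg.deriv.continuousAt).mul hu.continuousAt)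
  have hz₀ : h z₀ = 0 :=
    tendsto_nhds_unique (hcont.tendsto.mono_left nhdsWithin_le_nhds)
      (tendsto_const_nhds.congr' (hh.mono fun _ hz => hz.symm))
  simp only [h, sub_self, zero_mul, add_zero, dslope_same] at hz₀
  have : ((n : 𝕜) - c) * (u z₀ * deriv g z₀) = 0 := by linear_combination hz₀
  exact (sub_eq_zero.1 ((mul_eq_zero.1 this).resolve_right (mul_ne_zero hu0 hg'))).symm

open Complex in
theorem AnalyticOnNhd.exists_nat_eq_of_eventuallyEq_cpow {U : Set ℂ} {G g : ℂ → ℂ} {c w z₀ : ℂ}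
    (hUo : IsOpen U) (hU : IsPreconnected U) (hG : AnalyticOnNhd ℂ G U)
    (hg : AnalyticOnNhd ℂ g U) (hw : w ∈ U) (hgw : g w ∈ slitPlane)
    (hGw : G =ᶠ[𝓝 w] fun z => g z ^ c)
    (hz₀ : z₀ ∈ U) (hgz₀ : g z₀ = 0) (hg'z₀ : deriv g z₀ ≠ 0) :
    ∃ n : ℕ, c = n := by
  let P : ℂ → ℂ := fun z => deriv G z * g z - c * deriv g z * G z
  have hP : AnalyticOnNhd ℂ P U :=
    (hG.deriv.mul hg).sub ((analyticOnNhd_const.mul hg.deriv).mul hG)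
  have hPw : P =ᶠ[𝓝 w] 0 := by
    filter_upwards [hGw.eventuallyEq_nhds, hGw,
      (hg w hw).continuousAt.eventually (isOpen_slitPlane.mem_nhds hgw),
      (hg w hw).eventually_analyticAt] with z hGz hGz' hgz hgz'
    have hg0 : g z ≠ 0 := slitPlane_ne_zero hgz
    simp only [P, Pi.zero_apply]
    rw [hGz.deriv_eq, (hgz'.differentiableAt.hasDerivAt.cpow_const hgz).deriv, hGz',
      cpow_sub _ _ hg0, cpow_one]
    field_simp
    ring
  have hode : ∀ᶠ z in 𝓝 z₀, deriv G z * g z = c * deriv g z * G z :=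
    ((hP.eqOn_zero_of_preconnected_of_eventuallyEq_zero hU hw hPw).eventuallyEq_of_mem
      (hUo.mem_nhds hz₀)).mono fun z hz => sub_eq_zero.1 hz
  have hGw0 : analyticOrderAt G w ≠ ⊤ := by
    rw [analyticOrderAt_eq_zero.2 (Or.inr _)]
    · exact ENat.zero_ne_top
    · rw [hGw.eq_of_nhds]
      exact cpow_ne_zero_iff.2 (Or.inl (slitPlane_ne_zero hgw))
  obtain ⟨n, hn⟩ := ENat.ne_top_iff_exists.1
    (hG.analyticOrderAt_ne_top_of_isPreconnected hU hw hz₀ hGw0)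
  exact ⟨n, (hG z₀ hz₀).eq_analyticOrderAt_of_deriv_mul_eq_mul_deriv_mul (hg z₀ hz₀) hgz₀ hg'z₀
    hode hn.symm⟩

theorem AnalyticAt.eventuallyEq_of_eventually_ofReal_eq {f g : ℂ → ℂ} {a : ℝ}
    (hf : AnalyticAt ℂ f a) (hg : AnalyticAt ℂ g a) (h : ∀ᶠ θ : ℝ in 𝓝 a, f θ = g θ) :
    f =ᶠ[𝓝 (a : ℂ)] g := by
  have hofReal : Tendsto ((↑) : ℝ → ℂ) (𝓝[≠] a) (𝓝[≠] a) :=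
    Complex.continuous_ofReal.continuousWithinAt.tendsto_nhdsWithin fun θ hθ => by simpa using hθ
  exact (hf.frequently_eq_iff_eventually_eq hg).1
    (hofReal.frequently (h.filter_mono nhdsWithin_le_nhds).frequently)

theorem exists_re_lt_one_sub_add_mul_cexp_eq_zero {r l : ℝ} (hr : r ∈ Set.Ioo (0 : ℝ) 1)
    (hR : 1 < r / (1 - r) * exp l) : ∃ z : ℂ, z.re < l ∧ 1 - r + r * Complex.exp z = 0 := by
  obtain ⟨hr0, hr1⟩ := hr
  have hq : 0 < (1 - r) / r := div_pos (sub_pos.2 hr1) hr0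
  refine ⟨log ((1 - r) / r) + π * Complex.I, ?_, ?_⟩
  · have : (1 - r) / r < exp l := by
      rw [div_mul_eq_mul_div, one_lt_div (sub_pos.2 hr1)] at hR
      rw [div_lt_iff₀ hr0]
      linarith
    simpa using (log_lt_iff_lt_exp hq).2 this
  · rw [Complex.exp_add, Complex.exp_pi_mul_I, ← Complex.ofReal_exp, exp_log hq]
    have hrC : (r : ℂ) ≠ 0 := by exact_mod_cast hr0.ne'
    push_cast
    field_simp
    ring

theorem integrable_exp_mul_of_lintegral_eq_ofReal {μ : Measure ℝ} {θ c : ℝ}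
    (h : ∫⁻ t, ENNReal.ofReal (exp (θ * t)) ∂μ = ENNReal.ofReal c) :
    Integrable (fun t => exp (θ * t)) μ :=
  (lintegral_ofReal_ne_top_iff_integrable (by fun_prop) (.of_forall fun _ => (exp_pos _).le)).1
    (h ▸ ENNReal.ofReal_ne_top)

theorem mgf_id_eq_of_lintegral_eq_ofReal {μ : Measure ℝ} {θ c : ℝ} (hc : 0 ≤ c)
    (h : ∫⁻ t, ENNReal.ofReal (exp (θ * t)) ∂μ = ENNReal.ofReal c) : mgf id μ θ = c := by
  rw [mgf, integral_eq_lintegral_of_nonneg_ae (.of_forall fun _ => (exp_pos _).le) (by fun_prop)]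
  simp only [id_eq]
  rw [h, ENNReal.toReal_ofReal hc]

theorem one_sub_div_ofReal_mem_slitPlane {l : ℝ} {z : ℂ} (hl : 0 < l) (hz : z.re < l) :
    1 - z / l ∈ Complex.slitPlane := by
  refine Complex.mem_slitPlane_iff.2 (Or.inl ?_)
  rw [Complex.sub_re, Complex.one_re, Complex.div_ofReal_re]
  exact sub_pos.2 ((div_lt_one hl).2 hz)

theorem complexMGF_id_ofReal_mul_one_sub_div_cpow {μ : Measure ℝ} {l y θ c : ℝ} (hl : 0 < l)
    (hθ : θ < l) (hc : 0 ≤ c)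
    (h : ∫⁻ t, ENNReal.ofReal (exp (θ * t)) ∂μ = ENNReal.ofReal (c * (l / (l - θ)) ^ y)) :
    complexMGF id μ θ * (1 - θ / l) ^ (y : ℂ) = c := by
  have hθl : 0 ≤ 1 - θ / l := sub_nonneg.2 ((div_le_one hl).2 hθ.le)
  have hlθ : 0 < l - θ := sub_pos.2 hθ
  rw [complexMGF_ofReal, mgf_id_eq_of_lintegral_eq_ofReal (by positivity) h,
    show (1 : ℂ) - θ / l = ((1 - θ / l : ℝ) : ℂ) by push_cast; rfl, ← Complex.ofReal_cpow hθl,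
    ← Complex.ofReal_mul, mul_assoc, ← mul_rpow (by positivity) hθl,
    show l / (l - θ) * (1 - θ / l) = 1 by field_simp, one_rpow, mul_one]

theorem no_fractional_power_R_gt_one_general
    (r l x y : ℝ) (hr : r ∈ Set.Ioo (0:ℝ) 1) (hl : 0 < l)
    (hR : 1 < r / (1 - r) * Real.exp l)
    (hxnotint : ∀ n : ℤ, x ≠ n) :
    ¬ ∃ μ : Measure ℝ, IsProbabilityMeasure μ ∧
      ∀ θ : ℝ, θ < l →
        ∫⁻ t, ENNReal.ofReal (Real.exp (θ * t)) ∂μ =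
          ENNReal.ofReal ((1 - r + r * Real.exp θ) ^ x * (l / (l - θ)) ^ y) := by
  rintro ⟨μ, -, hμ⟩
  have hA : ∀ θ, 0 < 1 - r + r * exp θ := fun θ =>
    add_pos (sub_pos.2 hr.2) (mul_pos hr.1 (exp_pos θ))
  let U : Set ℂ := {z | z.re < l}
  have hUmgf : U ⊆ {z | z.re ∈ interior (integrableExpSet id μ)} := fun _ hz =>
    interior_maximal (fun θ hθ => integrable_exp_mul_of_lintegral_eq_ofReal (hμ θ hθ))
      isOpen_Iio hz
  let G : ℂ → ℂ := fun z => complexMGF id μ z * (1 - z / l) ^ (y : ℂ)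
  let g : ℂ → ℂ := fun z => 1 - r + r * Complex.exp z
  have hG : AnalyticOnNhd ℂ G U := (analyticOnNhd_complexMGF.mono hUmgf).mul fun z hz =>
    AnalyticAt.cpow (by fun_prop) analyticAt_const (one_sub_div_ofReal_mem_slitPlane hl hz)
  have hg : AnalyticOnNhd ℂ g U := fun z _ => by fun_prop
  have h0U : ((0 : ℝ) : ℂ) ∈ U := by simpa [U] using hl
  have hGg : G =ᶠ[𝓝 ((0 : ℝ) : ℂ)] fun z => g z ^ (x : ℂ) := by
    refine (hG _ h0U).eventuallyEq_of_eventually_ofReal_eq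
      ((hg _ h0U).cpow analyticAt_const (by simp [g])) ?_
    filter_upwards [Iio_mem_nhds hl] with θ hθ
    simp only [G]
    rw [complexMGF_id_ofReal_mul_one_sub_div_cpow hl hθ (rpow_nonneg (hA θ).le x) (hμ θ hθ),
      Complex.ofReal_cpow (hA θ).le]
    simp [g]
  obtain ⟨z₀, hz₀U, hgz₀⟩ := exists_re_lt_one_sub_add_mul_cexp_eq_zero hr hR
  obtain ⟨n, hn⟩ := hG.exists_nat_eq_of_eventuallyEq_cpow
    (isOpen_lt Complex.continuous_re continuous_const) (convex_halfSpace_re_lt l).isPreconnected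
    hg h0U (by simp [g]) hGg hz₀U hgz₀ (by simp [g, hr.1.ne'])
  exact hxnotint n (by exact_mod_cast hn)

theorem no_fractional_power_R_gt_one
    (r l x y : ℝ) (hr : r ∈ Set.Ioo (0:ℝ) 1) (hl : 0 < l)
    (hR : 1 < r / (1 - r) * Real.exp l)
    (hx : 0 < x) (hxnotint : ∀ n : ℤ, x ≠ n) (hy : 0 < y) :
    ¬ ∃ μ : Measure ℝ, IsProbabilityMeasure μ ∧
      ∀ θ : ℝ, θ < l →
        ∫⁻ t, ENNReal.ofReal (Real.exp (θ * t)) ∂μ =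
          ENNReal.ofReal ((1 - r + r * Real.exp θ) ^ x * (l / (l - θ)) ^ y) :=
  no_fractional_power_R_gt_one_general r l x y hr hl hR hxnotint
end

section
/- Let r ∈ (0,1), λ > 0, x > 0, y ≥ 1 with R = (r/(1-r))·e^λ ≤ 1. Then there exists a probability measure μ_{x,y} on ℝ with Laplace transform ∫ e^{θt} dμ_{x,y}(t) = (1-r+r·e^θ)^x · (λ/(λ-θ))^y for all θ < λ. -/
/-!
The measure is `f(t) dt` with `f(t) = ∑ₖ C(x,k) rᵏ (1-r)^(x-k) g(t-k)`, where `g` is the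
Gamma(y, λ) density: formally the law of `B + G` with `B` "binomial(x, r)" and `G` Gamma(y, λ)
independent, so the Laplace transform is the product of the two. For non-integer `x` the weights
change sign, and the point is that `f ≥ 0` nevertheless. With `R = r e^λ / (1-r)` the `k`-th term
is `(1-r)^x C(x,k) Rᵏ · e^(-λk) g(t-k)`, whose second factor is nonnegative and antitone in `k`
when `y ≥ 1`; by Abel summation it suffices that the partial sums of `∑ C(x,k) Rᵏ` are
nonnegative. For `0 ≤ R ≤ 1` they are: the terms are nonnegative up to `k ≈ x` and then alternate
with decreasing modulus. Integrating term by term (the series converges absolutely since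
`R e^(θ-λ) < 1`) gives the Laplace transform.
-/

open MeasureTheory Real ProbabilityTheory Finset Filter

theorem sum_range_mem_Icc_of_alternating (u σ : ℕ → ℝ) (hσ : ∀ j, σ j ∈ Set.Icc 0 1)
    (hu : ∀ j, u (j + 1) = -σ j * u j) (hu0 : 0 ≤ u 0) (n : ℕ) :
    ∑ j ∈ range n, u j ∈ Set.Icc 0 (u 0) := by
  induction n generalizing u σ with
  | zero => simpa using hu0
  | succ n ih =>
    -- `-(u ∘ succ)` is again of this form, with first term `σ 0 * u 0 ≤ u 0`.
    have htail := ih (fun j => -u (j + 1)) (fun j => σ (j + 1)) (fun j => hσ (j + 1))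
      (fun j => by simp [hu (j + 1)]) (by simpa [hu 0] using mul_nonneg (hσ 0).1 hu0)
    have hσu : σ 0 * u 0 ≤ u 0 := mul_le_of_le_one_left hu0 (hσ 0).2
    simp only [sum_neg_distrib, Set.mem_Icc, neg_nonneg, hu 0] at htail
    rw [sum_range_succ', Set.mem_Icc]
    constructor <;> linarith [htail.1, htail.2]

theorem sum_range_nonneg_of_ratio (b ρ : ℕ → ℝ) (m : ℕ) (hb : ∀ k, b (k + 1) = ρ k * b k)
    (hb0 : 0 ≤ b 0) (hρ_pos : ∀ k < m, 0 ≤ ρ k) (hρ_neg : ∀ k, m ≤ k → ρ k ∈ Set.Icc (-1) 0)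
    (n : ℕ) : 0 ≤ ∑ k ∈ range n, b k := by
  have hhead : ∀ k ≤ m, 0 ≤ b k := by
    intro k hk
    induction k with
    | zero => exact hb0
    | succ k ih => rw [hb]; exact mul_nonneg (hρ_pos k (by omega)) (ih (by omega))
  rcases le_or_gt n m with hnm | hmn
  · exact sum_nonneg fun k hk => hhead k ((mem_range.1 hk).le.trans hnm)
  obtain ⟨p, rfl⟩ := Nat.exists_eq_add_of_le hmn.le
  rw [sum_range_add]
  have htail := sum_range_mem_Icc_of_alternating (fun j => b (m + j)) (fun j => -ρ (m + j))
    (fun j => ⟨neg_nonneg.2 (hρ_neg _ le_self_add).2, neg_le.2 (hρ_neg _ le_self_add).1⟩)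
    (fun j => by simp [← add_assoc, hb]) (by simpa using hhead m le_rfl) p
  exact add_nonneg (sum_nonneg fun k hk => hhead k (mem_range.1 hk).le) htail.1

theorem sum_range_mul_nonneg_of_antitone (c d : ℕ → ℝ) (hc : ∀ n, 0 ≤ ∑ i ∈ range n, c i)
    (hd : Antitone d) (hd0 : ∀ i, 0 ≤ d i) (n : ℕ) : 0 ≤ ∑ i ∈ range n, c i * d i := by
  simp_rw [mul_comm (c _), ← smul_eq_mul (a := d _), sum_range_by_parts d c n, smul_eq_mul,
    sub_nonneg]
  exact (sum_nonpos fun i _ => mul_nonpos_of_nonpos_of_nonneg (sub_nonpos.2 (hd i.le_succ))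
    (hc _)).trans (mul_nonneg (hd0 _) (hc n))

theorem Ring.succ_smul_choose_succ {R : Type*} [Ring R] [BinomialRing R] [NatPowAssoc R]
    (r : R) (k : ℕ) : (k + 1) • Ring.choose r (k + 1) = Ring.choose r k * (r - k) := by
  simpa [Nat.choose_succ_self_right] using Ring.choose_smul_choose r (Nat.le_succ k)

namespace Real

theorem hasSum_choose_mul_pow (a : ℝ) {z : ℝ} (hz : |z| < 1) :
    HasSum (fun n => Ring.choose a n * z ^ n) ((1 + z) ^ a) := by
  have hz' : z ∈ Metric.eball (0 : ℝ) 1 := by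
    simpa [Metric.mem_eball, edist_dist, Real.dist_eq] using hz
  simpa [binomialSeries_apply, -FormalMultilinearSeries.apply_eq_prod_smul_coeff] using
    (one_add_rpow_hasFPowerSeriesOnBall_zero (a := a)).hasSum hz'

theorem summable_abs_choose_mul_pow (a : ℝ) {z : ℝ} (hz : |z| < 1) :
    Summable (fun n => |Ring.choose a n * z ^ n|) := by
  have hz' : z ∈ Metric.eball (0 : ℝ) (binomialSeries ℝ a).radius := by
    refine Metric.eball_subset_eball one_add_rpow_hasFPowerSeriesOnBall_zero.r_le ?_
    simpa [Metric.mem_eball, edist_dist, Real.dist_eq] using hz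
  simpa [binomialSeries_apply, -FormalMultilinearSeries.apply_eq_prod_smul_coeff] using
    (binomialSeries ℝ a).summable_norm_apply hz'

theorem sum_range_choose_mul_pow_nonneg {x z : ℝ} (hx : -1 ≤ x) (hz0 : 0 ≤ z) (hz1 : z ≤ 1)
    (n : ℕ) : 0 ≤ ∑ k ∈ range n, Ring.choose x k * z ^ k := by
  refine sum_range_nonneg_of_ratio _ (fun k => (x - k) * z / (k + 1)) ⌈x⌉₊ (fun k => ?_)
    (by simp) (fun k hk => ?_) (fun k hk => ?_) n
  · have h : ((k : ℝ) + 1) * Ring.choose x (k + 1) = Ring.choose x k * (x - k) := by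
      simpa [nsmul_eq_mul] using Ring.succ_smul_choose_succ x k
    field_simp
    linear_combination z ^ (k + 1) * h
  · exact div_nonneg (mul_nonneg (sub_nonneg.2 (Nat.lt_ceil.1 hk).le) hz0) (by positivity)
  · have hxk : x ≤ k := Nat.ceil_le.1 hk
    constructor
    · rw [le_div_iff₀ (by positivity)]
      nlinarith
    · exact div_nonpos_of_nonpos_of_nonneg (mul_nonpos_of_nonpos_of_nonneg (by linarith) hz0)
        (by positivity)

end Real

namespace ProbabilityTheory

variable {a r : ℝ}

theorem gammaPDFReal_of_neg {x : ℝ} (hx : x < 0) : gammaPDFReal a r x = 0 :=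
  if_neg hx.not_ge

theorem integrable_gammaPDFReal (ha : 0 < a) (hr : 0 < r) : Integrable (gammaPDFReal a r) := by
  refine ⟨(measurable_gammaPDFReal a r).aestronglyMeasurable, ?_⟩
  rw [hasFiniteIntegral_iff_ofReal (.of_forall (gammaPDFReal_nonneg ha hr))]
  exact (lintegral_gammaPDF_eq_one ha hr).trans_lt ENNReal.one_lt_top

theorem integral_gammaPDFReal (ha : 0 < a) (hr : 0 < r) : ∫ x, gammaPDFReal a r x = 1 := by
  rw [← ENNReal.ofReal_eq_one, ofReal_integral_eq_lintegral_ofReal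
    (integrable_gammaPDFReal ha hr) (.of_forall (gammaPDFReal_nonneg ha hr))]
  exact lintegral_gammaPDF_eq_one ha hr

theorem integrable_const_mul_gammaPDFReal_sub (ha : 0 < a) (hr : 0 < r) (c s : ℝ) :
    Integrable fun t => c * gammaPDFReal a r (t - s) :=
  ((integrable_gammaPDFReal ha hr).comp_sub_right s).const_mul c

theorem integral_const_mul_gammaPDFReal_sub (ha : 0 < a) (hr : 0 < r) (c s : ℝ) :
    ∫ t, c * gammaPDFReal a r (t - s) = c := by
  rw [integral_const_mul, integral_sub_right_eq_self (gammaPDFReal a r),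
    integral_gammaPDFReal ha hr, mul_one]

theorem integral_norm_const_mul_gammaPDFReal_sub (ha : 0 < a) (hr : 0 < r) (c s : ℝ) :
    ∫ t, ‖c * gammaPDFReal a r (t - s)‖ = |c| := by
  simp_rw [norm_mul, Real.norm_eq_abs, abs_of_nonneg (gammaPDFReal_nonneg ha hr _)]
  exact integral_const_mul_gammaPDFReal_sub ha hr _ s

theorem exp_mul_gammaPDFReal {θ : ℝ} (hr : 0 ≤ r) (hθ : θ < r) (x : ℝ) :
    exp (θ * x) * gammaPDFReal a r x = (r / (r - θ)) ^ a * gammaPDFReal a (r - θ) x := by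
  have hrθ : 0 < r - θ := by linarith
  have hexp : exp (-((r - θ) * x)) = exp (θ * x) * exp (-(r * x)) := by
    rw [← exp_add]; ring_nf
  unfold gammaPDFReal
  split_ifs
  · rw [div_rpow hr hrθ.le, hexp]
    field_simp
  · simp

theorem antitone_exp_neg_mul_gammaPDFReal_sub (ha : 1 ≤ a) (hr : 0 < r) (t : ℝ) :
    Antitone fun k : ℕ => exp (-(r * k)) * gammaPDFReal a r (t - k) := by
  have hshift : ∀ k : ℕ, (k : ℝ) ≤ t → exp (-(r * k)) * gammaPDFReal a r (t - k)
      = r ^ a / Gamma a * exp (-(r * t)) * (t - k) ^ (a - 1) := by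
    intro k hk
    rw [gammaPDFReal, if_pos (sub_nonneg.2 hk), mul_comm, mul_assoc, ← exp_add]
    ring_nf
  refine antitone_nat_of_succ_le fun k => ?_
  rcases lt_or_ge t (k + 1 : ℕ) with ht | ht
  · rw [gammaPDFReal_of_neg (sub_neg.2 ht), mul_zero]
    exact mul_nonneg (exp_pos _).le (gammaPDFReal_nonneg (by linarith) hr _)
  · rw [hshift _ ht, hshift _ (le_trans (by simp) ht)]
    gcongr
    linarith

/-- The density of `∑ₖ w k • (δₖ ∗ Gamma(a, r))`. -/
noncomputable def shiftedGammaMixture (w : ℕ → ℝ) (a r t : ℝ) : ℝ :=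
  ∑' k : ℕ, w k * gammaPDFReal a r (t - k)

section Mixture

variable (w : ℕ → ℝ)

theorem shiftedGammaMixture_eq_sum {t : ℝ} {N : ℕ} (ht : t < N) :
    shiftedGammaMixture w a r t = ∑ k ∈ range N, w k * gammaPDFReal a r (t - k) :=
  tsum_eq_sum fun k hk => by
    rw [gammaPDFReal_of_neg (sub_neg.2 (ht.trans_le (by simpa using hk))), mul_zero]

theorem measurable_shiftedGammaMixture : Measurable (shiftedGammaMixture w a r) := by
  refine measurable_of_tendsto_metrizable
    (f := fun N t => ∑ k ∈ range N, w k * gammaPDFReal a r (t - k))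
    (fun N => by fun_prop) (tendsto_pi_nhds.2 fun t => tendsto_const_nhds.congr' ?_)
  filter_upwards [eventually_gt_atTop ⌈t⌉₊] with N hN
  exact shiftedGammaMixture_eq_sum w ((Nat.le_ceil t).trans_lt (by exact_mod_cast hN))

theorem hasSum_integral_shiftedGammaMixture (ha : 0 < a) (hr : 0 < r)
    (hw : Summable fun k => |w k|) : HasSum w (∫ t, shiftedGammaMixture w a r t) := by
  have hsum := hasSum_integral_of_summable_integral_norm
    (fun k : ℕ => integrable_const_mul_gammaPDFReal_sub ha hr (w k) k)
    (by simpa only [integral_norm_const_mul_gammaPDFReal_sub ha hr] using hw)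
  simp only [integral_const_mul_gammaPDFReal_sub ha hr] at hsum
  exact hsum

theorem integrable_shiftedGammaMixture (ha : 0 < a) (hr : 0 < r)
    (hw : Summable fun k => |w k|) : Integrable (shiftedGammaMixture w a r) := by
  refine ⟨(measurable_shiftedGammaMixture w).aestronglyMeasurable, ?_⟩
  calc ∫⁻ t, ‖shiftedGammaMixture w a r t‖ₑ
      ≤ ∫⁻ t, ∑' k : ℕ, ‖w k * gammaPDFReal a r (t - k)‖ₑ :=
        lintegral_mono fun t => enorm_tsum_le_tsum_enorm
    _ = ∑' k : ℕ, ENNReal.ofReal |w k| := by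
        rw [lintegral_tsum fun k =>
          (integrable_const_mul_gammaPDFReal_sub ha hr (w k) k).aemeasurable.enorm]
        congr with k
        rw [← ofReal_integral_norm_eq_lintegral_enorm
          (integrable_const_mul_gammaPDFReal_sub ha hr (w k) k),
          integral_norm_const_mul_gammaPDFReal_sub ha hr]
    _ < ⊤ := by
        rw [← ENNReal.ofReal_tsum_of_nonneg (fun k => abs_nonneg (w k)) hw]
        exact ENNReal.ofReal_lt_top

theorem shiftedGammaMixture_nonneg (ha : 1 ≤ a) (hr : 0 < r)
    (hw : ∀ n, 0 ≤ ∑ k ∈ range n, w k * exp (r * k)) (t : ℝ) :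
    0 ≤ shiftedGammaMixture w a r t := by
  rw [shiftedGammaMixture_eq_sum w (N := ⌊t⌋₊ + 1) (by push_cast; exact Nat.lt_floor_add_one t)]
  have hsplit (k : ℕ) : w k * gammaPDFReal a r (t - k)
      = w k * exp (r * k) * (exp (-(r * k)) * gammaPDFReal a r (t - k)) := by
    rw [mul_assoc, ← mul_assoc (exp _), ← exp_add, add_neg_cancel, exp_zero, one_mul]
  simp_rw [hsplit]
  exact sum_range_mul_nonneg_of_antitone _ _ hw (antitone_exp_neg_mul_gammaPDFReal_sub ha hr t)
    (fun k => mul_nonneg (exp_pos _).le (gammaPDFReal_nonneg (by linarith) hr _)) _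

theorem exp_mul_shiftedGammaMixture {θ : ℝ} (hr : 0 ≤ r) (hθ : θ < r) (t : ℝ) :
    exp (θ * t) * shiftedGammaMixture w a r t
      = (r / (r - θ)) ^ a * shiftedGammaMixture (fun k => w k * exp (θ * k)) a (r - θ) t := by
  unfold shiftedGammaMixture
  rw [← tsum_mul_left, ← tsum_mul_left]
  congr with k
  rw [show θ * t = θ * k + θ * (t - k) by ring, exp_add]
  linear_combination (w k * exp (θ * k)) * exp_mul_gammaPDFReal (a := a) hr hθ (t - k)

theorem lintegral_exp_mul_withDensity_shiftedGammaMixture {θ : ℝ} (ha : 0 < a) (hr : 0 ≤ r)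
    (hθ : θ < r) (hf : ∀ t, 0 ≤ shiftedGammaMixture w a r t)
    (hw : Summable fun k => |w k * exp (θ * k)|) :
    ∫⁻ t, ENNReal.ofReal (exp (θ * t))
        ∂(volume.withDensity fun t => ENNReal.ofReal (shiftedGammaMixture w a r t))
      = ENNReal.ofReal ((r / (r - θ)) ^ a * ∑' k, w k * exp (θ * k)) := by
  have hrθ : 0 < r - θ := by linarith
  rw [lintegral_withDensity_eq_lintegral_mul _ (measurable_shiftedGammaMixture w).ennreal_ofReal
    (by fun_prop)]
  have htilt (t : ℝ) : ENNReal.ofReal (shiftedGammaMixture w a r t) * ENNReal.ofReal (exp (θ * t))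
      = ENNReal.ofReal ((r / (r - θ)) ^ a *
          shiftedGammaMixture (fun k => w k * exp (θ * k)) a (r - θ) t) := by
    rw [← ENNReal.ofReal_mul (hf t), mul_comm, exp_mul_shiftedGammaMixture w hr hθ]
  simp_rw [Pi.mul_apply, htilt]
  rw [← ofReal_integral_eq_lintegral_ofReal
      ((integrable_shiftedGammaMixture _ ha hrθ hw).const_mul _)
      (.of_forall fun t => by
        dsimp only [Pi.zero_apply]
        rw [← exp_mul_shiftedGammaMixture w hr hθ]
        exact mul_nonneg (exp_pos _).le (hf t)),
    integral_const_mul, (hasSum_integral_shiftedGammaMixture _ ha hrθ hw).tsum_eq]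

end Mixture

end ProbabilityTheory

/-- The mass at `k` of the binomial law with parameters `x` and `r`, `C(x,k) rᵏ (1-r)^(x-k)`;
for non-integer `x` it is negative for infinitely many `k`. -/
noncomputable def binomialWeight (x r : ℝ) (k : ℕ) : ℝ :=
  (1 - r) ^ x * Ring.choose x k * (r / (1 - r)) ^ k

theorem binomialWeight_mul_exp (x r θ : ℝ) (k : ℕ) :
    binomialWeight x r k * exp (θ * k)
      = (1 - r) ^ x * (Ring.choose x k * (r / (1 - r) * exp θ) ^ k) := by
  rw [binomialWeight, mul_pow, mul_comm θ, exp_nat_mul]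
  ring

theorem hasSum_binomialWeight_mul_exp (x : ℝ) {r θ : ℝ} (hr : r ∈ Set.Ioo 0 1)
    (hθ : r / (1 - r) * exp θ < 1) :
    HasSum (fun k : ℕ => binomialWeight x r k * exp (θ * k)) ((1 - r + r * exp θ) ^ x) := by
  have h1r : 0 < 1 - r := sub_pos.2 hr.2
  have hz : 0 ≤ r / (1 - r) * exp θ := mul_nonneg (div_nonneg hr.1.le h1r.le) (exp_pos θ).le
  rw [show 1 - r + r * exp θ = (1 - r) * (1 + r / (1 - r) * exp θ) by field_simp,
    mul_rpow h1r.le (by linarith)]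
  simpa only [binomialWeight_mul_exp] using
    (Real.hasSum_choose_mul_pow x (abs_lt.2 ⟨by linarith, hθ⟩)).mul_left ((1 - r) ^ x)

theorem summable_abs_binomialWeight_mul_exp (x : ℝ) {r θ : ℝ} (hr : r ∈ Set.Ioo 0 1)
    (hθ : r / (1 - r) * exp θ < 1) :
    Summable fun k : ℕ => |binomialWeight x r k * exp (θ * k)| := by
  have h1r : 0 < 1 - r := sub_pos.2 hr.2
  have hz : 0 ≤ r / (1 - r) * exp θ := mul_nonneg (div_nonneg hr.1.le h1r.le) (exp_pos θ).le
  simpa only [binomialWeight_mul_exp, abs_mul] using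
    (Real.summable_abs_choose_mul_pow x (abs_lt.2 ⟨by linarith, hθ⟩)).mul_left |(1 - r) ^ x|

theorem sum_range_binomialWeight_mul_exp_nonneg {x r θ : ℝ} (hx : -1 ≤ x) (hr : r ∈ Set.Ioo 0 1)
    (hθ : r / (1 - r) * exp θ ≤ 1) (n : ℕ) :
    0 ≤ ∑ k ∈ range n, binomialWeight x r k * exp (θ * k) := by
  have h1r : 0 < 1 - r := sub_pos.2 hr.2
  have hz : 0 ≤ r / (1 - r) * exp θ := mul_nonneg (div_nonneg hr.1.le h1r.le) (exp_pos θ).le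
  simp_rw [binomialWeight_mul_exp, ← mul_sum]
  exact mul_nonneg (rpow_nonneg h1r.le x) (Real.sum_range_choose_mul_pow_nonneg hx hz hθ n)

theorem exists_power_R_le_one
    (r l x y : ℝ) (hr : r ∈ Set.Ioo (0:ℝ) 1) (hl : 0 < l)
    (hx : 0 < x) (hy : 1 ≤ y)
    (hR : r / (1 - r) * Real.exp l ≤ 1) :
    ∃ μ : Measure ℝ, IsProbabilityMeasure μ ∧
      ∀ θ : ℝ, θ < l →
        ∫⁻ t, ENNReal.ofReal (Real.exp (θ * t)) ∂μ =
          ENNReal.ofReal ((1 - r + r * Real.exp θ) ^ x * (l / (l - θ)) ^ y) := by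
  have hdens : ∀ t, 0 ≤ shiftedGammaMixture (binomialWeight x r) y l t :=
    shiftedGammaMixture_nonneg _ hy hl
      (sum_range_binomialWeight_mul_exp_nonneg (by linarith) hr hR)
  have hlaplace : ∀ θ < l,
      ∫⁻ t, ENNReal.ofReal (exp (θ * t)) ∂(volume.withDensity fun t =>
          ENNReal.ofReal (shiftedGammaMixture (binomialWeight x r) y l t))
        = ENNReal.ofReal ((1 - r + r * exp θ) ^ x * (l / (l - θ)) ^ y) := by
    intro θ hθ
    have hθR : r / (1 - r) * exp θ < 1 :=
      (mul_lt_mul_of_pos_left (exp_lt_exp.2 hθ) (div_pos hr.1 (sub_pos.2 hr.2))).trans_le hR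
    rw [lintegral_exp_mul_withDensity_shiftedGammaMixture _ (by linarith) hl.le hθ hdens
      (summable_abs_binomialWeight_mul_exp x hr hθR),
      (hasSum_binomialWeight_mul_exp x hr hθR).tsum_eq, mul_comm]
  refine ⟨_, ⟨?_⟩, hlaplace⟩
  simpa [hl.ne'] using hlaplace 0 hl
end

section
/- Let r ∈ (0,1) and let ν = (1-r)δ₀ + rδ₁ be the Bernoulli(r) distribution. The Jørgensen set of ν equals ℕ* = {1,2,3,...}: for x > 0 non-integer there is no probability measure on ℝ whose Laplace transform equals (1-r+r·e^θ)^x for all θ ∈ ℝ. -/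
/-!
If `μ` had Laplace transform `L θ = (1 - r + r e^θ)^x`, then for every polynomial `P ≥ 0` on
`(0, ∞)` the combination `∑ₖ Pₖ L (θ - k) = ∫ e^{θt} P(e^{-t}) dμ(t)` would be nonnegative.
With `w = r e^θ / (1 - r)`, the binomial series expands it as
`(1 - r)^x ∑ₙ C(x, n) P(e^{-n}) wⁿ` near `w = 0`. For `m = ⌊x⌋` and
`P = ∏_{j ≤ m + 1} (X - e^{-j})²` the terms `n ≤ m + 1` vanish, and the leading term
`C(x, m + 2) P(e^{-(m+2)}) w^{m+2}` is negative, since `x - (m + 1)` is the only negative factor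
of `C(x, m + 2)`; so the combination is negative for small `w > 0`.
-/

open MeasureTheory Real Finset Polynomial Filter Topology Asymptotics
open scoped Nat

theorem Ring.choose_eq_prod_range_div {R : Type*} [Field R] [CharZero R] (a : R) (n : ℕ) :
    Ring.choose a n = (∏ j ∈ range n, (a - j)) / n ! := by
  rw [Ring.choose_eq_smul, ← descPochhammer_eval_eq_prod_range,
    ← descPochhammer_map (algebraMap ℤ R), eval_map_algebraMap, aeval_eq_smeval, smul_eq_mul,
    div_eq_inv_mul]

theorem Ring.choose_neg_of_lt_of_lt {a : ℝ} {m : ℕ} (hma : m < a) (ham : a < m + 1) :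
    Ring.choose a (m + 2) < 0 := by
  have hpos : 0 < ∏ j ∈ range (m + 1), (a - j) := prod_pos fun j hj => by
    have : (j : ℝ) ≤ m := by exact_mod_cast Nat.lt_succ_iff.mp (mem_range.mp hj)
    linarith
  rw [Ring.choose_eq_prod_range_div, prod_range_succ]
  exact div_neg_of_neg_of_pos (mul_neg_of_pos_of_neg hpos (by push_cast; linarith))
    (by positivity)

theorem isBigO_one_add_mul_rpow_sub_sum (a c : ℝ) (n : ℕ) :
    (fun w : ℝ => (1 + c * w) ^ a - ∑ i ∈ range n, Ring.choose a i * c ^ i * w ^ i)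
      =O[𝓝 0] fun w => w ^ n := by
  have hc : Tendsto (fun w : ℝ => c * w) (𝓝 0) (𝓝 0) := by
    simpa using (continuous_const_mul c).tendsto 0
  have h := ((one_add_rpow_hasFPowerSeriesAt_zero (a := a)).isBigO_sub_partialSum_pow
    n).comp_tendsto hc
  have hpow : (fun w : ℝ => ‖c * w‖ ^ n) =O[𝓝 0] fun w => w ^ n := by
    simpa [mul_pow] using (isBigO_const_mul_self (‖c‖ ^ n) (fun w : ℝ => w ^ n) (𝓝 0)).norm_left
  refine (h.trans hpow).congr_left fun w => ?_
  simp only [zero_add, FormalMultilinearSeries.partialSum, binomialSeries,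
    FormalMultilinearSeries.apply_eq_prod_smul_coeff, prod_const, card_univ, Fintype.card_fin,
    FormalMultilinearSeries.coeff_ofScalars, smul_eq_mul, Function.comp_apply, mul_pow,
    sub_right_inj]
  exact sum_congr rfl fun i _ => by ring

theorem isBigO_sum_coeff_mul_one_add_rpow_sub_sum (P : ℝ[X]) (a q : ℝ) (n : ℕ) :
    (fun w : ℝ => ∑ k ∈ range (P.natDegree + 1), P.coeff k * (1 + q ^ k * w) ^ a -
      ∑ i ∈ range n, Ring.choose a i * P.eval (q ^ i) * w ^ i) =O[𝓝 0] fun w => w ^ n := by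
  refine (IsBigO.sum (s := range (P.natDegree + 1)) fun k _ =>
    (isBigO_one_add_mul_rpow_sub_sum a (q ^ k) n).const_mul_left (P.coeff k)).congr_left
    fun w => ?_
  simp only [Finset.sum_apply, mul_sub, sum_sub_distrib, eval_eq_sum_range, mul_sum, sum_mul]
  rw [sum_comm (s := range n)]
  congr 1
  exact sum_congr rfl fun k _ => sum_congr rfl fun i _ => by ring

theorem eventually_neg_of_isBigO_sub_mul_pow {g : ℝ → ℝ} {b : ℝ} {n : ℕ} (hb : b < 0)
    (hg : (fun w => g w - b * w ^ n) =O[𝓝 0] fun w => w ^ (n + 1)) :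
    ∀ᶠ w in 𝓝[>] 0, g w < 0 := by
  have hsmall := (hg.trans_isLittleO (isLittleO_pow_pow n.lt_succ_self)).def
    (half_pos (neg_pos.mpr hb))
  filter_upwards [nhdsWithin_le_nhds hsmall, self_mem_nhdsWithin] with w hw hw0
  have hwn : 0 < w ^ n := pow_pos hw0 n
  rw [Real.norm_of_nonneg hwn.le] at hw
  nlinarith [le_abs_self (g w - b * w ^ n), Real.norm_eq_abs (g w - b * w ^ n)]

theorem eventually_sum_coeff_mul_one_add_rpow_neg {P : ℝ[X]} {a q : ℝ} {n : ℕ}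
    (hroots : ∀ i < n, P.eval (q ^ i) = 0) (hlead : Ring.choose a n * P.eval (q ^ n) < 0) :
    ∀ᶠ w in 𝓝[>] 0, ∑ k ∈ range (P.natDegree + 1), P.coeff k * (1 + q ^ k * w) ^ a < 0 := by
  refine eventually_neg_of_isBigO_sub_mul_pow hlead
    ((isBigO_sum_coeff_mul_one_add_rpow_sub_sum P a q (n + 1)).congr_left fun w => ?_)
  have hpartial : ∑ i ∈ range (n + 1), Ring.choose a i * P.eval (q ^ i) * w ^ i =
      Ring.choose a n * P.eval (q ^ n) * w ^ n := by
    rw [sum_range_succ, sum_eq_zero fun i hi => by rw [hroots i (mem_range.mp hi)]; ring, zero_add]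
  rw [hpartial]

theorem exists_nonneg_eval_eq_zero_eval_pos (z : ℕ → ℝ) (n : ℕ) (hz : ∀ i < n, z i ≠ z n) :
    ∃ P : ℝ[X], (∀ u, 0 ≤ P.eval u) ∧ (∀ i < n, P.eval (z i) = 0) ∧ 0 < P.eval (z n) := by
  refine ⟨∏ j ∈ range n, (X - C (z j)) ^ 2, fun u => ?_, fun i hi => ?_, ?_⟩
  · simp only [eval_prod, eval_pow, eval_sub, eval_X, eval_C]
    exact prod_nonneg fun j _ => sq_nonneg _
  · simp only [eval_prod, eval_pow, eval_sub, eval_X, eval_C]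
    exact prod_eq_zero (mem_range.mpr hi) (by simp)
  · simp only [eval_prod, eval_pow, eval_sub, eval_X, eval_C]
    exact prod_pos fun j hj => by have := sub_ne_zero.mpr (hz j (mem_range.mp hj)).symm; positivity

theorem integrable_and_integral_eq_of_lintegral_ofReal_eq {α : Type*} [MeasurableSpace α]
    {μ : Measure α} {f : α → ℝ} (hf : AEStronglyMeasurable f μ) (hf0 : 0 ≤ᵐ[μ] f) {c : ℝ}
    (hc : 0 ≤ c) (h : ∫⁻ t, ENNReal.ofReal (f t) ∂μ = ENNReal.ofReal c) :
    Integrable f μ ∧ ∫ t, f t ∂μ = c := by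
  refine ⟨⟨hf, ?_⟩, ?_⟩
  · rw [hasFiniteIntegral_iff_ofReal hf0, h]
    exact ENNReal.ofReal_lt_top
  · rw [integral_eq_lintegral_of_nonneg_ae hf0 hf, h, ENNReal.toReal_ofReal hc]

theorem sum_coeff_mul_integral_exp_nonneg {μ : Measure ℝ}
    (hμ : ∀ s, Integrable (fun t => exp (s * t)) μ) {P : ℝ[X]} (hP : ∀ u, 0 < u → 0 ≤ P.eval u)
    (θ : ℝ) : 0 ≤ ∑ k ∈ range (P.natDegree + 1), P.coeff k * ∫ t, exp ((θ - k) * t) ∂μ := by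
  have hsum : ∑ k ∈ range (P.natDegree + 1), P.coeff k * ∫ t, exp ((θ - k) * t) ∂μ =
      ∫ t, ∑ k ∈ range (P.natDegree + 1), P.coeff k * exp ((θ - k) * t) ∂μ := by
    rw [integral_finsetSum _ fun k _ => (hμ _).const_mul _]
    simp_rw [integral_const_mul]
  have hintegrand : ∀ t, ∑ k ∈ range (P.natDegree + 1), P.coeff k * exp ((θ - k) * t) =
      exp (θ * t) * P.eval (exp (-t)) := fun t => by
    rw [eval_eq_sum_range, mul_sum]
    refine sum_congr rfl fun k _ => ?_
    rw [← exp_nat_mul, mul_left_comm, ← exp_add]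
    ring_nf
  rw [hsum, integral_congr_ae (Eventually.of_forall hintegrand)]
  exact integral_nonneg fun t => mul_nonneg (exp_pos _).le (hP _ (exp_pos _))

theorem bernoulli_jorgensen_set
    (r x : ℝ) (hr : r ∈ Set.Ioo (0:ℝ) 1) (hx : 0 < x) (hxnotint : ∀ n : ℤ, x ≠ n) :
    ¬ ∃ μ : Measure ℝ, IsProbabilityMeasure μ ∧
      ∀ θ : ℝ, ∫⁻ t, ENNReal.ofReal (Real.exp (θ * t)) ∂μ =
        ENNReal.ofReal ((1 - r + r * Real.exp θ) ^ x) := by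
  rintro ⟨μ, -, hL⟩
  obtain ⟨hr0, hr1⟩ := hr
  have hbase : ∀ θ, 0 < 1 - r + r * exp θ := fun θ => by nlinarith [exp_pos θ]
  have hμ := fun θ => integrable_and_integral_eq_of_lintegral_ofReal_eq
    (by fun_prop : AEStronglyMeasurable (fun t => exp (θ * t)) μ)
    (Eventually.of_forall fun t => (exp_pos _).le) (rpow_nonneg (hbase θ).le x) (hL θ)
  set m := ⌊x⌋₊
  have hmx : (m : ℝ) < x :=
    (Nat.floor_le hx.le).lt_of_ne fun h => hxnotint m (by exact_mod_cast h.symm)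
  obtain ⟨P, hP, hroots, hlead⟩ := exists_nonneg_eval_eq_zero_eval_pos (exp (-1) ^ ·) (m + 2)
    fun i hi => (pow_lt_pow_right_of_lt_one₀ (exp_pos _) (exp_lt_one_iff.mpr (by norm_num)) hi).ne'
  obtain ⟨w, hw, hw0⟩ := ((eventually_sum_coeff_mul_one_add_rpow_neg hroots
    (mul_neg_of_neg_of_pos (Ring.choose_neg_of_lt_of_lt hmx (Nat.lt_floor_add_one x)) hlead)).and
    self_mem_nhdsWithin).exists
  -- chosen so that `r e^θ = (1 - r) w`
  set θ := log ((1 - r) * w / r)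
  have hterm : ∀ k : ℕ, ∫ t, exp ((θ - k) * t) ∂μ = (1 - r) ^ x * (1 + exp (-1) ^ k * w) ^ x :=
    fun k => by
      rw [(hμ _).2, ← mul_rpow (by linarith) (by positivity), exp_sub, exp_log (by positivity),
        ← exp_nat_mul, mul_neg_one, exp_neg]
      congr 1
      field_simp
  have key := sum_coeff_mul_integral_exp_nonneg (fun s => (hμ s).1) (fun u _ => hP u) θ
  simp_rw [hterm, mul_left_comm _ ((1 - r) ^ x), ← mul_sum] at key
  exact (mul_neg_of_pos_of_neg (rpow_pos_of_pos (by linarith) x) hw).not_ge key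
end

section
/- Let r ∈ (0,1), λ > 0. Then R := (r/(1-r))·e^λ > 1 if and only if log((1-r)/r) < λ, and in that case the function z ↦ 1 + (r/(1-r))·e^z (holomorphic on ℂ) has a zero z₀ = log((1-r)/r) + iπ with Re(z₀) < λ; consequently, for non-integer x > 0, there is no holomorphic function g on the strip {Re(z) < λ} with g(θ) = (1-r+r·e^θ)^x for all real θ < λ. -/
/-!
With `B z = 1 - r + r e^z`, the real function `G = B ^ x` satisfies `G' B = x B' G`. By the
identity theorem a holomorphic `g` on the strip agreeing with `G` on the real axis satisfies the
same equation on the whole strip, in particular near `z₀`, where `B` has a simple zero. Writing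
`g = (z - z₀)ⁿ u` with `u z₀ ≠ 0` and comparing leading terms there gives `x = n`.
-/

open Complex Real Filter Topology

theorem Real.one_lt_mul_exp_iff_log_inv_lt {a t : ℝ} (ha : 0 < a) :
    1 < a * Real.exp t ↔ Real.log a⁻¹ < t := by
  rw [Real.log_lt_iff_lt_exp (inv_pos.mpr ha), inv_lt_iff_one_lt_mul₀' ha]

theorem Complex.exp_ofReal_log_add_pi_mul_I {a : ℝ} (ha : 0 < a) :
    Complex.exp (Real.log a + Real.pi * I) = -a := by
  rw [Complex.exp_add, Complex.exp_pi_mul_I, ← Complex.ofReal_exp, Real.exp_log ha, mul_neg_one]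

theorem Complex.frequently_nhdsNE_ofReal {p : ℂ → Prop} {t : ℝ} (h : ∀ᶠ s : ℝ in 𝓝 t, p s) :
    ∃ᶠ z in 𝓝[≠] (t : ℂ), p z :=
  have hmap : Tendsto ((↑) : ℝ → ℂ) (𝓝[≠] t) (𝓝[≠] (t : ℂ)) :=
    continuous_ofReal.continuousWithinAt.tendsto_nhdsWithin fun _ hs ↦ by simpa using hs
  hmap.frequently (h.filter_mono nhdsWithin_le_nhds).frequently

theorem deriv_cpow_const_mul_self {B : ℂ → ℂ} {c z : ℂ} (hB : DifferentiableAt ℂ B z)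
    (hBz : B z ∈ slitPlane) :
    deriv (fun w ↦ B w ^ c) z * B z = c * deriv B z * B z ^ c := by
  rw [(hB.hasDerivAt.cpow_const hBz).deriv, Complex.cpow_sub _ _ (slitPlane_ne_zero hBz),
    Complex.cpow_one]
  field_simp [slitPlane_ne_zero hBz]

theorem natCast_mul_pow_sub_one_mul {R : Type*} [Semiring R] (n : ℕ) (w : R) :
    (n : R) * w ^ (n - 1) * w = n * w ^ n := by
  cases n <;> simp [pow_succ, mul_assoc]

section OrderOfZero

variable {𝕜 : Type*} [NontriviallyNormedField 𝕜] [CompleteSpace 𝕜]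

theorem eventually_deriv_eq_of_eventuallyEq_pow_mul {g u : 𝕜 → 𝕜} {z₀ : 𝕜} {n : ℕ}
    (hu : AnalyticAt 𝕜 u z₀) (hgu : g =ᶠ[𝓝 z₀] fun z ↦ (z - z₀) ^ n * u z) :
    ∀ᶠ z in 𝓝 z₀, deriv g z = n * (z - z₀) ^ (n - 1) * u z + (z - z₀) ^ n * deriv u z := by
  filter_upwards [hgu.eventuallyEq_nhds, hu.eventually_analyticAt] with z hgz huz
  have hpow : HasDerivAt (fun w ↦ (w - z₀) ^ n) (n * (z - z₀) ^ (n - 1)) z := by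
    simpa using ((hasDerivAt_id z).sub_const z₀).fun_pow n
  exact hgz.deriv_eq.trans (hpow.mul huz.differentiableAt.hasDerivAt).deriv

/-- Writing `g = (z - z₀)ⁿ u` and `h = (z - z₀) v`, the equation becomes
`(n u + (z - z₀) u') v = c h' u` off `z₀`; by continuity `n u v = c h' u` at `z₀`,
where `v z₀ = h' z₀ ≠ 0` and `u z₀ ≠ 0`. -/
theorem AnalyticAt.eq_natCast_of_deriv_mul_eq {g h : 𝕜 → 𝕜} {z₀ c : 𝕜} {n : ℕ}
    (hg : AnalyticAt 𝕜 g z₀) (hh : AnalyticAt 𝕜 h z₀) (hhz₀ : h z₀ = 0) (hh' : deriv h z₀ ≠ 0)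
    (hn : analyticOrderAt g z₀ = n)
    (hode : ∀ᶠ z in 𝓝 z₀, deriv g z * h z = c * deriv h z * g z) : c = n := by
  obtain ⟨u, hu, huz₀, hgu⟩ := hg.analyticOrderAt_eq_natCast.mp hn
  simp only [smul_eq_mul] at hgu
  set v := dslope h z₀
  have hhv (z : 𝕜) : h z = (z - z₀) * v z := by
    simpa [hhz₀] using (sub_smul_dslope h z₀ z).symm
  have hvz₀ : v z₀ = deriv h z₀ := dslope_same h z₀
  set F : 𝕜 → 𝕜 := fun z ↦ (n * u z + (z - z₀) * deriv u z) * v z - c * deriv h z * u z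
  have hF : ContinuousAt F z₀ := by
    have := hh.deriv.continuousAt
    have := hu.deriv.continuousAt
    have := continuousAt_dslope_same.mpr hh.differentiableAt
    have := hu.continuousAt
    fun_prop
  have hFev : ∀ᶠ z in 𝓝[≠] z₀, F z = 0 := by
    filter_upwards [nhdsWithin_le_nhds (hode.and (hgu.and
      (eventually_deriv_eq_of_eventuallyEq_pow_mul hu hgu))), self_mem_nhdsWithin]
      with z ⟨hodez, hgz, hg'z⟩ hz
    refine (mul_eq_zero.mp ?_).resolve_left (pow_ne_zero n (sub_ne_zero.mpr hz))
    rw [hg'z, hgz, hhv] at hodez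
    linear_combination hodez - u z * v z * natCast_mul_pow_sub_one_mul n (z - z₀)
  have hFz₀ : F z₀ = 0 :=
    ((hF.eventuallyEq_nhds_iff_eventuallyEq_nhdsNE continuousAt_const).mp hFev).self_of_nhds
  simp only [F, sub_self, zero_mul, add_zero, hvz₀] at hFz₀
  refine (mul_right_cancel₀ (mul_ne_zero hh' huz₀) ?_).symm
  linear_combination hFz₀

end OrderOfZero

theorem exists_natCast_eq_of_differentiableOn_eq_cpow {S : Set ℂ} {g B : ℂ → ℂ} {c w z₀ : ℂ}
    (hS : IsOpen S) (hSc : IsPreconnected S) (hg : DifferentiableOn ℂ g S)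
    (hB : DifferentiableOn ℂ B S) (hw : w ∈ S) (hBw : B w ∈ slitPlane)
    (hgw : ∃ᶠ z in 𝓝[≠] w, g z = B z ^ c) (hz₀ : z₀ ∈ S) (hBz₀ : B z₀ = 0)
    (hB'z₀ : deriv B z₀ ≠ 0) : ∃ n : ℕ, c = n := by
  have hgA : AnalyticOnNhd ℂ g S := hg.analyticOnNhd hS
  have hBA : AnalyticOnNhd ℂ B S := hB.analyticOnNhd hS
  have hgB : g =ᶠ[𝓝 w] fun z ↦ B z ^ c :=
    ((hgA w hw).frequently_eq_iff_eventually_eq ((hBA w hw).cpow analyticAt_const hBw)).mp hgw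
  have hode_w : ∀ᶠ z in 𝓝 w, deriv g z * B z = c * deriv B z * g z := by
    have hslit : ∀ᶠ z in 𝓝 w, B z ∈ slitPlane :=
      (hBA w hw).continuousAt.preimage_mem_nhds (isOpen_slitPlane.mem_nhds hBw)
    filter_upwards [hgB.eventuallyEq_nhds, hslit, hS.eventually_mem hw] with z hgz hBz hzS
    rw [hgz.deriv_eq, hgz.self_of_nhds,
      deriv_cpow_const_mul_self (hB.differentiableAt (hS.mem_nhds hzS)) hBz]
  have hode : Set.EqOn (fun z ↦ deriv g z * B z) (fun z ↦ c * deriv B z * g z) S :=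
    (hgA.deriv.mul hBA).eqOn_of_preconnected_of_eventuallyEq
      ((analyticOnNhd_const.mul hBA.deriv).mul hgA) hSc hw hode_w
  have hgw_ne : g w ≠ 0 := by
    rw [hgB.self_of_nhds]
    exact Complex.cpow_ne_zero_iff.mpr (Or.inl (slitPlane_ne_zero hBw))
  have hord : analyticOrderAt g z₀ ≠ ⊤ :=
    hgA.analyticOrderAt_ne_top_of_isPreconnected hSc hw hz₀
      (by simp [analyticOrderAt_eq_zero.mpr (Or.inr hgw_ne)])
  obtain ⟨n, hn⟩ := ENat.ne_top_iff_exists.mp hord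
  exact ⟨n, (hgA z₀ hz₀).eq_natCast_of_deriv_mul_eq (hBA z₀ hz₀) hBz₀ hB'z₀ hn.symm
    (Filter.eventually_of_mem (hS.mem_nhds hz₀) fun z hz ↦ hode hz)⟩

theorem exists_natCast_eq_of_differentiableOn_eq_one_sub_add_mul_exp_rpow {r l x : ℝ}
    (hr : r ∈ Set.Ioo (0 : ℝ) 1) (hl : Real.log ((1 - r) / r) < l) {g : ℂ → ℂ}
    (hg : DifferentiableOn ℂ g {z : ℂ | z.re < l})
    (hgθ : ∀ θ : ℝ, θ < l → g θ = ((1 - r + r * Real.exp θ) ^ x : ℝ)) : ∃ n : ℕ, x = n := by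
  obtain ⟨hr0, hr1⟩ := hr
  set B : ℂ → ℂ := fun z ↦ 1 - r + r * Complex.exp z
  have hB' (z : ℂ) : HasDerivAt B (r * Complex.exp z) z :=
    ((Complex.hasDerivAt_exp z).const_mul (r : ℂ)).const_add (1 - (r : ℂ))
  have hBreal (t : ℝ) : B t = ((1 - r + r * Real.exp t : ℝ) : ℂ) := by push_cast; rfl
  have hpos (t : ℝ) : 0 < 1 - r + r * Real.exp t := by nlinarith [Real.exp_pos t]
  have hgB : ∀ᶠ t : ℝ in 𝓝 (l - 1), g t = B t ^ (x : ℂ) := by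
    filter_upwards [Iio_mem_nhds (sub_one_lt l)] with t ht
    rw [hgθ t ht, hBreal, Complex.ofReal_cpow (hpos t).le]
  have hBz₀ : B (Real.log ((1 - r) / r) + Real.pi * I) = 0 := by
    have hrC : (r : ℂ) ≠ 0 := by exact_mod_cast hr0.ne'
    simp only [B, Complex.exp_ofReal_log_add_pi_mul_I (div_pos (sub_pos.mpr hr1) hr0)]
    push_cast
    field_simp
    ring
  obtain ⟨n, hn⟩ := exists_natCast_eq_of_differentiableOn_eq_cpow
    (isOpen_lt continuous_re continuous_const) (convex_halfSpace_re_lt l).isPreconnected hg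
    (fun z _ ↦ (hB' z).differentiableAt.differentiableWithinAt) (w := ((l - 1 : ℝ) : ℂ))
    (by simp) (by rw [hBreal]; exact ofReal_mem_slitPlane.mpr (hpos _))
    (Complex.frequently_nhdsNE_ofReal hgB) (by simpa using hl) hBz₀
    (by rw [(hB' _).deriv]; exact mul_ne_zero (by exact_mod_cast hr0.ne') (Complex.exp_ne_zero _))
  exact ⟨n, by exact_mod_cast hn⟩

theorem branch_point_obstruction_general (r l x : ℝ) (hr : r ∈ Set.Ioo (0:ℝ) 1)
    (hxnotint : ∀ n : ℤ, x ≠ n) :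
    (1 < r / (1 - r) * Real.exp l ↔ Real.log ((1 - r) / r) < l) ∧
    (1 < r / (1 - r) * Real.exp l →
      (((Real.log ((1 - r) / r) : ℂ) + Real.pi * Complex.I).re < l ∧
        1 + (r / (1 - r) : ℂ) *
          Complex.exp ((Real.log ((1 - r) / r) : ℂ) + Real.pi * Complex.I) = 0) ∧
      ¬ ∃ g : ℂ → ℂ, DifferentiableOn ℂ g {z : ℂ | z.re < l} ∧
        ∀ θ : ℝ, θ < l → g θ = ((1 - r + r * Real.exp θ) ^ x : ℝ)) := by
  obtain ⟨hr0, hr1⟩ := hr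
  have hiff : 1 < r / (1 - r) * Real.exp l ↔ Real.log ((1 - r) / r) < l :=
    inv_div r (1 - r) ▸ Real.one_lt_mul_exp_iff_log_inv_lt (div_pos hr0 (sub_pos.mpr hr1))
  refine ⟨hiff, fun hR ↦ ⟨⟨by simpa using hiff.mp hR, ?_⟩, ?_⟩⟩
  · have h1rC : (1 : ℂ) - r ≠ 0 := by exact_mod_cast (sub_pos.mpr hr1).ne'
    have hrC : (r : ℂ) ≠ 0 := by exact_mod_cast hr0.ne'
    rw [Complex.exp_ofReal_log_add_pi_mul_I (div_pos (sub_pos.mpr hr1) hr0)]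
    push_cast
    field_simp
    ring
  · rintro ⟨g, hg, hgθ⟩
    obtain ⟨n, hn⟩ := exists_natCast_eq_of_differentiableOn_eq_one_sub_add_mul_exp_rpow
      ⟨hr0, hr1⟩ (hiff.mp hR) hg hgθ
    exact hxnotint n (by exact_mod_cast hn)

theorem branch_point_obstruction (r l x : ℝ) (hr : r ∈ Set.Ioo (0:ℝ) 1) (hl : 0 < l)
    (hx : 0 < x) (hxnotint : ∀ n : ℤ, x ≠ n) :
    (1 < r / (1 - r) * Real.exp l ↔ Real.log ((1 - r) / r) < l) ∧
    (1 < r / (1 - r) * Real.exp l →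
      (((Real.log ((1 - r) / r) : ℂ) + Real.pi * Complex.I).re < l ∧
        1 + (r / (1 - r) : ℂ) *
          Complex.exp ((Real.log ((1 - r) / r) : ℂ) + Real.pi * Complex.I) = 0) ∧
      ¬ ∃ g : ℂ → ℂ, DifferentiableOn ℂ g {z : ℂ | z.re < l} ∧
        ∀ θ : ℝ, θ < l → g θ = ((1 - r + r * Real.exp θ) ^ x : ℝ)) :=
  branch_point_obstruction_general r l x hr hxnotint
end
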